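/- With the bracket of N_1(n,k): for α, β, γ ∈ GF(2)^n \ {0} all of parity |α| = |β| = |γ| = 1 and pairwise distinct with α + β + γ ≠ 0, the Jacobi identity holds: [e_α,[e_β,e_γ]] + [e_β,[e_γ,e_α]] + [e_γ,[e_α,e_β]] = 0. -/

import Mathlib

/-- Parity `|α|` of the coordinate sum of `α ∈ GF(2)^n`. -/
def par {n : ℕ} (α : Fin n → ZMod 2) : ZMod 2 := ∑ i, α i

/-- Standard inner product `(α, β)` on `GF(2)^n`. -/
def dotp {n : ℕ} (α β : Fin n → ZMod 2) : ZMod 2 := ∑ i, α i * β i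

/-- Structure constant of `N₁(n,k)` on `e_{α+β}`: equal to `1` if `|α| = |β| = 1`,
and to `(α,β)` if `|α| = 0` or `|β| = 0`. -/
noncomputable def cN1 (k : Type*) [Field k] {n : ℕ} (α β : Fin n → ZMod 2) : k :=
  if par α = 1 ∧ par β = 1 then 1 else if dotp α β = 1 then 1 else 0

/-- The bracket of `N₁(n,k)`, defined on the free `k`-module with basis
`{e_α : α ∈ GF(2)^n \ {0}}` (realized as finitely supported functions), extended
bilinearly from `⁅e_α, e_β⁆ = cN1 α β • e_{α+β}` (and `0` when `α + β = 0`). -/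
noncomputable def brN1 {k : Type*} [Field k] {n : ℕ}
    (f g : {v : Fin n → ZMod 2 // v ≠ 0} →₀ k) :
    {v : Fin n → ZMod 2 // v ≠ 0} →₀ k :=
  f.sum fun α a => g.sum fun β b =>
    if h : α.1 + β.1 ≠ 0 then
      Finsupp.single ⟨α.1 + β.1, h⟩ (a * b * cN1 k α.1 β.1)
    else 0

/-- The basis vector `e_α` of `N₁(n,k)`. -/
noncomputable def eN1 (k : Type*) [Field k] {n : ℕ} (α : Fin n → ZMod 2) (h : α ≠ 0) :
    {v : Fin n → ZMod 2 // v ≠ 0} →₀ k :=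
  Finsupp.single ⟨α, h⟩ 1

/-!
For odd `β, γ` the bracket `⁅e_β, e_γ⁆` is `e_{β+γ}` with `β + γ` even, and in characteristic 2
the structure constant of an odd root against an even one is the image of the inner product
under `GF(2) → k`, hence additive in the even root. So the three terms of the Jacobi sum are
multiples of `e_{α+β+γ}` (or zero), with coefficients adding up to the image of
`2((α, β) + (β, γ) + (γ, α)) = 0`.
-/

open Finsupp

section Forms

variable {n : ℕ}

lemma par_add (α β : Fin n → ZMod 2) : par (α + β) = par α + par β :=
  Finset.sum_add_distrib

lemma dotp_add_right (α β γ : Fin n → ZMod 2) : dotp α (β + γ) = dotp α β + dotp α γ :=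
  dotProduct_add α β γ

lemma dotp_comm (α β : Fin n → ZMod 2) : dotp α β = dotp β α :=
  dotProduct_comm α β

lemma par_add_of_par_eq_one {α β : Fin n → ZMod 2} (hα : par α = 1) (hβ : par β = 1) :
    par (α + β) = 0 := by
  rw [par_add, hα, hβ]
  rfl

end Forms

section StructureConstants

variable (k : Type*) [Field k] {n : ℕ}

lemma cN1_zero_right (α : Fin n → ZMod 2) : cN1 k α 0 = 0 := by
  have hpar : par (0 : Fin n → ZMod 2) = 0 := Finset.sum_const_zero
  have hdot : dotp α 0 = 0 := dotProduct_zero α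
  simp [cN1, hpar, hdot]

lemma cN1_of_par_eq_one {α β : Fin n → ZMod 2} (hα : par α = 1) (hβ : par β = 1) :
    cN1 k α β = 1 := by
  simp [cN1, hα, hβ]

lemma cN1_of_par_eq_zero_right [CharP k 2] (α : Fin n → ZMod 2) {δ : Fin n → ZMod 2}
    (hδ : par δ = 0) : cN1 k α δ = ZMod.castHom (dvd_refl 2) k (dotp α δ) := by
  simp only [cN1, hδ, zero_ne_one, and_false, if_false]
  rcases (by decide : ∀ d : ZMod 2, d = 0 ∨ d = 1) (dotp α δ) with h | h <;> simp [h]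

lemma cN1_jacobi_of_par_eq_one [CharP k 2] {α β γ : Fin n → ZMod 2}
    (hα : par α = 1) (hβ : par β = 1) (hγ : par γ = 1) :
    cN1 k β γ * cN1 k α (β + γ) + cN1 k γ α * cN1 k β (γ + α) +
      cN1 k α β * cN1 k γ (α + β) = 0 := by
  rw [cN1_of_par_eq_one k hβ hγ, cN1_of_par_eq_one k hγ hα, cN1_of_par_eq_one k hα hβ,
    cN1_of_par_eq_zero_right k α (par_add_of_par_eq_one hβ hγ),
    cN1_of_par_eq_zero_right k β (par_add_of_par_eq_one hγ hα),
    cN1_of_par_eq_zero_right k γ (par_add_of_par_eq_one hα hβ)]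
  simp only [one_mul, ← map_add, dotp_add_right, dotp_comm β α, dotp_comm γ α, dotp_comm γ β]
  convert map_zero (ZMod.castHom (dvd_refl 2) k) using 2
  ring_nf
  reduce_mod_char

end StructureConstants

section Brackets

variable {k : Type*} [Field k] {n : ℕ}

-- Lets brackets of basis vectors be stated without a case split on whether the roots add to `0`.
noncomputable def eN1OrZero (k : Type*) [Field k] (v : Fin n → ZMod 2) :
    {v : Fin n → ZMod 2 // v ≠ 0} →₀ k :=
  if h : v ≠ 0 then eN1 k v h else 0

lemma smul_eN1OrZero_of_ne_zero (c : k) {v : Fin n → ZMod 2} (hv : v ≠ 0) :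
    c • eN1OrZero k v = single ⟨v, hv⟩ c := by
  simp [eN1OrZero, hv, eN1, smul_single]

lemma brN1_zero_right (f : {v : Fin n → ZMod 2 // v ≠ 0} →₀ k) : brN1 f 0 = 0 := by
  simp [brN1]

lemma brN1_single_single (a b : {v : Fin n → ZMod 2 // v ≠ 0}) (x y : k) :
    brN1 (single a x) (single b y) = (x * y * cN1 k a.1 b.1) • eN1OrZero k (a.1 + b.1) := by
  unfold brN1
  rw [sum_single_index, sum_single_index]
  · split_ifs with h
    · rw [smul_eN1OrZero_of_ne_zero _ h]
    · simp [not_not.mp h, eN1OrZero]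
  · simp
  · rw [sum_single_index] <;> simp

lemma brN1_eN1_eN1 {α β : Fin n → ZMod 2} (hα : α ≠ 0) (hβ : β ≠ 0) :
    brN1 (eN1 k α hα) (eN1 k β hβ) = cN1 k α β • eN1OrZero k (α + β) := by
  rw [eN1, eN1, brN1_single_single, one_mul, one_mul]

lemma brN1_eN1_smul_eN1OrZero {α : Fin n → ZMod 2} (hα : α ≠ 0) (c : k)
    (v : Fin n → ZMod 2) :
    brN1 (eN1 k α hα) (c • eN1OrZero k v) = (c * cN1 k α v) • eN1OrZero k (α + v) := by
  by_cases hv : v = 0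
  · simp [hv, eN1OrZero, brN1_zero_right, cN1_zero_right]
  · rw [smul_eN1OrZero_of_ne_zero c hv, eN1, brN1_single_single, one_mul]

lemma brN1_eN1_brN1_eN1_eN1 {α β γ : Fin n → ZMod 2} (hα : α ≠ 0) (hβ : β ≠ 0)
    (hγ : γ ≠ 0) :
    brN1 (eN1 k α hα) (brN1 (eN1 k β hβ) (eN1 k γ hγ)) =
      (cN1 k β γ * cN1 k α (β + γ)) • eN1OrZero k (α + β + γ) := by
  rw [brN1_eN1_eN1, brN1_eN1_smul_eN1OrZero, add_assoc]

end Brackets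

theorem N1_jacobi_odd_case_general {n : ℕ} {k : Type*} [Field k] (hchar : CharP k 2)
    (α β γ : Fin n → ZMod 2)
    (hα : α ≠ 0) (hβ : β ≠ 0) (hγ : γ ≠ 0)
    (hpα : par α = 1) (hpβ : par β = 1) (hpγ : par γ = 1) :
    brN1 (eN1 k α hα) (brN1 (eN1 k β hβ) (eN1 k γ hγ)) +
      brN1 (eN1 k β hβ) (brN1 (eN1 k γ hγ) (eN1 k α hα)) +
      brN1 (eN1 k γ hγ) (brN1 (eN1 k α hα) (eN1 k β hβ)) = 0 := by
  have := hchar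
  rw [brN1_eN1_brN1_eN1_eN1, brN1_eN1_brN1_eN1_eN1, brN1_eN1_brN1_eN1_eN1,
    ← add_rotate α β γ, add_rotate γ α β, ← add_smul, ← add_smul,
    cN1_jacobi_of_par_eq_one k hpα hpβ hpγ, zero_smul]

/-- In `N₁(n,k)`, for pairwise distinct nonzero `α, β, γ ∈ GF(2)^n` of
parity `|α| = |β| = |γ| = 1` with `α + β + γ ≠ 0`, the Jacobi identity
`⁅e_α,⁅e_β,e_γ⁆⁆ + ⁅e_β,⁅e_γ,e_α⁆⁆ + ⁅e_γ,⁅e_α,e_β⁆⁆ = 0` holds. -/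
theorem N1_jacobi_odd_case {n : ℕ} {k : Type*} [Field k] (hchar : CharP k 2)
    (α β γ : Fin n → ZMod 2)
    (hα : α ≠ 0) (hβ : β ≠ 0) (hγ : γ ≠ 0)
    (hpα : par α = 1) (hpβ : par β = 1) (hpγ : par γ = 1)
    (hαβ : α ≠ β) (hβγ : β ≠ γ) (hαγ : α ≠ γ)
    (hsum : α + β + γ ≠ 0) :
    brN1 (eN1 k α hα) (brN1 (eN1 k β hβ) (eN1 k γ hγ)) +
      brN1 (eN1 k β hβ) (brN1 (eN1 k γ hγ) (eN1 k α hα)) +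
      brN1 (eN1 k γ hγ) (brN1 (eN1 k α hα) (eN1 k β hβ)) = 0 :=
  N1_jacobi_odd_case_general hchar α β γ hα hβ hγ hpα hpβ hpγ
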